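/- One has Z_{β,n} ≤ 2^n for every n and every realization of the environment, and for every η > 0, ℙ-almost surely, for all but finitely many n, Z_{β,n} ≥ 2^n·(1 − (1+η)·n^{−c*}). Consequently, for every η > 0, ℙ-almost surely, for all but finitely many n, π_n(x) ≤ (1+η)·2^{−n} for every x ∈ V_n. -/

import Mathlib

/-!
Truncation at `1` can only lower a weight, so `Z ≤ 2ⁿ`. For the lower bound, `Z` falls short
of `2ⁿ` by at most the number of sites with `r* τ(x) < 1`. By the symmetry of the centred
Gaussian each such event has the probability `n^{-c*}` that defines `r*`; the events are
pairwise independent, so their number has mean `2ⁿ n^{-c*}` and variance at most that, and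
Chebyshev's inequality bounds the probability that it exceeds `(1 + η)` times its mean by
`n^{c*} / (η² 2ⁿ)`, which is summable; Borel–Cantelli concludes. The bound on `π` follows
since `n^{-c*} → 0`.
-/

open MeasureTheory ProbabilityTheory Filter Real

section

open scoped NNReal ENNReal Finset Topology

lemma summable_rpow_div_two_pow (c : ℝ) : Summable fun n : ℕ ↦ (n : ℝ) ^ c / 2 ^ n := by
  have hgeom : Summable fun n : ℕ ↦ (n : ℝ) ^ ⌈c⌉₊ * (1 / 2 : ℝ) ^ n :=
    summable_pow_mul_geometric_of_norm_lt_one _ (by norm_num)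
  refine hgeom.of_norm_bounded_eventually_nat ?_
  filter_upwards [eventually_ge_atTop 1] with n hn
  have hn' : (1 : ℝ) ≤ n := by exact_mod_cast hn
  rw [Real.norm_of_nonneg (by positivity), div_eq_mul_inv, one_div, inv_pow]
  gcongr
  exact_mod_cast Real.rpow_le_rpow_of_exponent_le hn' (Nat.le_ceil c)

open Finset in
lemma card_sub_card_filter_le_sum_min_one {ι : Type*} [Fintype ι] {a : ι → ℝ}
    (ha : ∀ i, 0 ≤ a i) (p : ι → Prop) [DecidablePred p] (hp : ∀ i, ¬ p i → 1 ≤ a i) :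
    (Fintype.card ι : ℝ) - #{i | p i} ≤ ∑ i, min 1 (a i) := by
  rw [natCast_card_filter, Fintype.card_eq_sum_ones, Nat.cast_sum, Nat.cast_one,
    ← sum_sub_distrib]
  refine sum_le_sum fun i _ ↦ ?_
  split_ifs with h
  · simpa using ha i
  · simpa using hp i h

lemma min_one_div_sum_min_one_le_inv {ι : Type*} [Fintype ι] (a : ι → ℝ) {c : ℝ} (hc : 0 < c)
    (h : c ≤ ∑ i, min 1 (a i)) (j : ι) : min 1 (a j) / ∑ i, min 1 (a i) ≤ c⁻¹ := by
  calc min 1 (a j) / ∑ i, min 1 (a i) ≤ 1 / ∑ i, min 1 (a i) :=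
        div_le_div_of_nonneg_right (min_le_left _ _) (hc.le.trans h)
    _ ≤ 1 / c := one_div_le_one_div_of_le hc h
    _ = c⁻¹ := one_div c

lemma eventually_min_one_div_sum_le_of_tendsto {ι : ℕ → Type*} [∀ n, Fintype (ι n)]
    {a : ∀ n, ι n → ℝ} {N ε : ℕ → ℝ} (hN : ∀ n, 0 < N n) (hε : Tendsto ε atTop (𝓝 0))
    {η : ℝ} (hη : 0 < η)
    (h : ∀ᶠ n in atTop, N n * (1 - (1 + η) * ε n) ≤ ∑ i, min 1 (a n i)) :
    ∀ᶠ n in atTop, ∀ j, min 1 (a n j) / ∑ i, min 1 (a n i) ≤ (1 + η) * (N n)⁻¹ := by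
  have hsmall : ∀ᶠ n in atTop, (1 + η) * ε n ≤ η / (1 + η) := by
    have hlim := hε.const_mul (1 + η)
    rw [mul_zero] at hlim
    exact hlim.eventually (eventually_le_nhds (by positivity))
  filter_upwards [h, hsmall] with n hZ hn j
  have hNn := hN n
  refine (min_one_div_sum_min_one_le_inv (a n) (c := N n / (1 + η)) (by positivity) ?_ j).trans_eq
    (by rw [inv_div, div_eq_mul_inv])
  calc N n / (1 + η) = N n * (1 - η / (1 + η)) := by field_simp; ring
    _ ≤ N n * (1 - (1 + η) * ε n) := by gcongr
    _ ≤ _ := hZ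

variable {Ω : Type*} [MeasurableSpace Ω] {P : Measure Ω}

lemma ProbabilityTheory.IndepSet.indepFun_indicator_one {s t : Set Ω} (h : IndepSet s t P) :
    IndepFun (s.indicator (1 : Ω → ℝ)) (t.indicator (1 : Ω → ℝ)) P := by
  have hmeas (u : Set Ω) :
      Measurable[MeasurableSpace.generateFrom {u}] (u.indicator (1 : Ω → ℝ)) :=
    Measurable.indicator (m := MeasurableSpace.generateFrom {u}) measurable_const
      (MeasurableSpace.measurableSet_generateFrom rfl)
  rw [IndepSet_iff_Indep] at h
  exact indep_of_indep_of_le_right (indep_of_indep_of_le_left h (hmeas s).comap_le)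
    (hmeas t).comap_le

open Classical Finset in
lemma measure_le_abs_card_mem_sub_le [IsProbabilityMeasure P] {ι : Type*} [Fintype ι]
    {A : ι → Set Ω} (hA : ∀ i, MeasurableSet (A i))
    (hindep : Pairwise fun i j ↦ IndepSet (A i) (A j) P) {ε : ℝ} (hε : 0 < ε) :
    P {ω | ε ≤ |(#{i | ω ∈ A i} : ℝ) - ∑ i, P.real (A i)|}
      ≤ ENNReal.ofReal ((∑ i, P.real (A i)) / ε ^ 2) := by
  set S : Ω → ℝ := ∑ i, (A i).indicator 1
  have hS (ω : Ω) : S ω = #{i | ω ∈ A i} := by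
    simp only [S, Finset.sum_apply, Set.indicator_apply, Pi.one_apply, natCast_card_filter]
  have hL2 (i : ι) : MemLp ((A i).indicator (1 : Ω → ℝ)) 2 P :=
    memLp_indicator_const 2 (hA i) 1 (Or.inr (measure_ne_top _ _))
  have hmean : P[S] = ∑ i, P.real (A i) := by
    simp [S, integral_finsetSum _ fun i _ ↦ (hL2 i).integrable one_le_two,
      integral_indicator_one (hA _)]
  have hvar : variance S P ≤ ∑ i, P.real (A i) := by
    rw [IndepFun.variance_sum (fun i _ ↦ hL2 i)
      (fun i _ j _ hij ↦ (hindep hij).indepFun_indicator_one)]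
    gcongr with i
    calc variance ((A i).indicator 1) P ≤ P[(A i).indicator (1 : Ω → ℝ) ^ 2] :=
          variance_le_expectation_sq (hL2 i).1
      _ = P.real (A i) := by
          have hsq : (A i).indicator (1 : Ω → ℝ) ^ 2 = (A i).indicator 1 := by
            ext ω
            by_cases h : ω ∈ A i <;> simp [h]
          rw [hsq]
          exact integral_indicator_one (hA i)
  calc P {ω | ε ≤ |(#{i | ω ∈ A i} : ℝ) - ∑ i, P.real (A i)|}
      = P {ω | ε ≤ |S ω - P[S]|} := by rw [hmean]; simp only [hS]
    _ ≤ ENNReal.ofReal (variance S P / ε ^ 2) :=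
        meas_ge_le_variance_div_sq (memLp_finsetSum' _ fun i _ ↦ hL2 i) hε
    _ ≤ ENNReal.ofReal ((∑ i, P.real (A i)) / ε ^ 2) := by gcongr

open Classical Finset in
theorem ae_eventually_card_mem_le [IsProbabilityMeasure P] {ι : ℕ → Type*}
    [∀ n, Fintype (ι n)] {A : ∀ n, ι n → Set Ω} (hA : ∀ n i, MeasurableSet (A n i))
    (hindep : ∀ n, Pairwise fun i j ↦ IndepSet (A n i) (A n j) P) {m : ℕ → ℝ}
    (hm : ∀ᶠ n in atTop, ∑ i, P.real (A n i) = m n) (hpos : ∀ᶠ n in atTop, 0 < m n)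
    (hsum : Summable fun n ↦ (m n)⁻¹) {η : ℝ} (hη : 0 < η) :
    ∀ᵐ ω ∂P, ∀ᶠ n in atTop, (#{i | ω ∈ A n i} : ℝ) ≤ (1 + η) * m n := by
  set C : ℕ → Set Ω := fun n ↦ {ω | (1 + η) * m n < #{i | ω ∈ A n i}}
  have hC : ∀ᶠ n in atTop, P.real (C n) ≤ (η ^ 2)⁻¹ * (m n)⁻¹ := by
    filter_upwards [hm, hpos] with n hmn hmpos
    have hsub : C n ⊆ {ω | η * m n ≤ |(#{i | ω ∈ A n i} : ℝ) - ∑ i, P.real (A n i)|} := by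
      intro ω hω
      simp only [C, Set.mem_ofPred_eq] at hω ⊢
      rw [hmn, le_abs]
      left
      linarith
    have hcheb := (measure_mono hsub).trans
      (measure_le_abs_card_mem_sub_le (hA n) (hindep n) (by positivity))
    rw [hmn] at hcheb
    calc P.real (C n) ≤ m n / (η * m n) ^ 2 :=
          ENNReal.toReal_le_of_le_ofReal (by positivity) hcheb
      _ = (η ^ 2)⁻¹ * (m n)⁻¹ := by field_simp
  have hsumC : Summable fun n ↦ P.real (C n) :=
    (hsum.mul_left _).of_norm_bounded_eventually_nat <| by
      filter_upwards [hC] with n hn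
      rwa [Real.norm_of_nonneg measureReal_nonneg]
  have htsum : ∑' n, P (C n) ≠ ∞ := by
    simp_rw [fun n ↦ (ofReal_measureReal (μ := P) (s := C n)).symm]
    rw [← ENNReal.ofReal_tsum_of_nonneg (fun _ ↦ measureReal_nonneg) hsumC]
    exact ENNReal.ofReal_ne_top
  filter_upwards [ae_eventually_notMem htsum] with ω hω
  filter_upwards [hω] with n hn
  simpa [C] using hn

theorem ae_eventually_card_mul_le_sum_min_one [IsProbabilityMeasure P] {ι : ℕ → Type*}
    [∀ n, Fintype (ι n)] [∀ n, Nonempty (ι n)] {w : ∀ n, ι n → Ω → ℝ}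
    (hw : ∀ n i, Measurable (w n i)) (hindep : ∀ n, Pairwise fun i j ↦ IndepFun (w n i) (w n j) P)
    (hnonneg : ∀ᶠ n in atTop, ∀ i ω, 0 ≤ w n i ω) {p : ℕ → ℝ}
    (hp : ∀ᶠ n in atTop, ∀ i, P.real {ω | w n i ω < 1} = p n) (hpos : ∀ᶠ n in atTop, 0 < p n)
    (hsum : Summable fun n ↦ (Fintype.card (ι n) * p n)⁻¹) {η : ℝ} (hη : 0 < η) :
    ∀ᵐ ω ∂P, ∀ᶠ n in atTop,
      Fintype.card (ι n) * (1 - (1 + η) * p n) ≤ ∑ i, min 1 (w n i ω) := by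
  have hcount := ae_eventually_card_mem_le (A := fun n i ↦ {ω | w n i ω < 1})
    (fun n i ↦ measurableSet_lt (hw n i) measurable_const)
    (fun n i j hij ↦ (indepFun_iff_indepSet_preimage (hw n i) (hw n j)).1 (hindep n hij)
      _ _ measurableSet_Iio measurableSet_Iio)
    (by filter_upwards [hp] with n hn; simp [hn])
    (by filter_upwards [hpos] with n hn; positivity) hsum hη
  filter_upwards [hcount] with ω hω
  filter_upwards [hω, hnonneg] with n hn hn0
  have hZ := card_sub_card_filter_le_sum_min_one (hn0 · ω) (fun i ↦ w n i ω < 1)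
    fun i hi ↦ not_lt.1 hi
  linarith

lemma gaussianReal_Ioi_neg {v : ℝ≥0} (hv : v ≠ 0) (a : ℝ) :
    gaussianReal 0 v (Set.Ioi (-a)) = gaussianReal 0 v (Set.Iic a) := by
  have := nullSingletonClass_gaussianReal (μ := 0) hv
  calc gaussianReal 0 v (Set.Ioi (-a))
      = (gaussianReal 0 v).map (fun x ↦ -x) (Set.Iio a) := by
        rw [Measure.map_apply measurable_neg measurableSet_Iio]
        congr 1
        ext x
        simp
    _ = gaussianReal 0 v (Set.Iic a) := by
        rw [gaussianReal_map_neg, neg_zero]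
        exact measure_congr Iio_ae_eq_Iic

lemma measureReal_mul_exp_neg_mul_lt_one {X : Ω → ℝ} {v : ℝ≥0} (hv : v ≠ 0)
    (hX : HasLaw X (gaussianReal 0 v) P) {β r : ℝ} (hβ : 0 < β) (hr : 0 < r) :
    P.real {ω | r * exp (-β * X ω) < 1} = P.real {ω | r ≤ exp (-β * X ω)} := by
  have hlt : {x : ℝ | r * exp (-β * x) < 1} = Set.Ioi (-(-log r / β)) := by
    ext x
    rw [Set.mem_ofPred_eq, Set.mem_Ioi, neg_div, neg_neg, div_lt_iff₀ hβ,
      show r * exp (-β * x) = exp (log r + -β * x) by rw [exp_add, exp_log hr], Real.exp_lt_one_iff]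
    constructor <;> intro h <;> linarith
  have hle : {x : ℝ | r ≤ exp (-β * x)} = Set.Iic (-log r / β) := by
    ext x
    rw [Set.mem_ofPred_eq, Set.mem_Iic, le_div_iff₀ hβ, ← log_le_iff_le_exp hr]
    constructor <;> intro h <;> linarith
  rw [hX.measureReal_eq (p := fun x ↦ r * exp (-β * x) < 1) (by rw [hlt]; exact measurableSet_Ioi),
    hX.measureReal_eq (p := fun x ↦ r ≤ exp (-β * x)) (by rw [hle]; exact measurableSet_Iic),
    hlt, hle, measureReal_def, measureReal_def, gaussianReal_Ioi_neg hv]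

end

theorem Zbn_bounds
    {Ω : Type*} [MeasurableSpace Ω] (P : Measure Ω) [IsProbabilityMeasure P]
    (H : (n : ℕ) → (Fin n → Bool) → Ω → ℝ)
    (hmeas : ∀ n x, Measurable (H n x))
    (hgauss : ∀ n x, Measure.map (H n x) P = gaussianReal 0 n)
    (hindep : iIndepFun
      (fun p : (Σ n : ℕ, (Fin n → Bool)) => H p.1 p.2) P)
    (β : ℝ) (hβ : 0 < β)
    (cstar : ℝ) (hcstar : 1 + Real.log 4 < cstar)
    (rstar : ℕ → ℝ)
    (hrstar : ∀ n, 2 ≤ n → ∀ x : Fin n → Bool, 0 < rstar n ∧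
      (n : ℝ) ^ cstar * (P {ω | rstar n ≤ Real.exp (-β * H n x ω)}).toReal = 1) :
    (∀ (n : ℕ) (ω : Ω),
        (∑ x : Fin n → Bool, min 1 (rstar n * Real.exp (-β * H n x ω))) ≤ (2 : ℝ) ^ n) ∧
    (∀ η : ℝ, 0 < η → ∀ᵐ ω ∂P, ∀ᶠ n : ℕ in atTop,
        (2 : ℝ) ^ n * (1 - (1 + η) * (n : ℝ) ^ (-cstar))
          ≤ ∑ x : Fin n → Bool, min 1 (rstar n * Real.exp (-β * H n x ω))) ∧
    (∀ η : ℝ, 0 < η → ∀ᵐ ω ∂P, ∀ᶠ n : ℕ in atTop,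
        ∀ x : Fin n → Bool,
          min 1 (rstar n * Real.exp (-β * H n x ω)) /
              (∑ y : Fin n → Bool, min 1 (rstar n * Real.exp (-β * H n y ω)))
            ≤ (1 + η) * ((2 : ℝ) ^ n)⁻¹) := by
  have hprob (n : ℕ) (hn : 2 ≤ n) (x : Fin n → Bool) :
      P.real {ω | rstar n * exp (-β * H n x ω) < 1} = (n : ℝ) ^ (-cstar) := by
    obtain ⟨hr, hnorm⟩ := hrstar n hn x
    rw [rpow_neg n.cast_nonneg]
    exact (measureReal_mul_exp_neg_mul_lt_one (by positivity)
      ⟨(hmeas n x).aemeasurable, hgauss n x⟩ hβ hr).trans (eq_inv_of_mul_eq_one_right hnorm)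
  have hg (n : ℕ) : Measurable fun t : ℝ ↦ rstar n * exp (-β * t) := by fun_prop
  have hlower (η : ℝ) (hη : 0 < η) : ∀ᵐ ω ∂P, ∀ᶠ n : ℕ in atTop,
      (2 : ℝ) ^ n * (1 - (1 + η) * (n : ℝ) ^ (-cstar))
        ≤ ∑ x : Fin n → Bool, min 1 (rstar n * exp (-β * H n x ω)) := by
    simpa using ae_eventually_card_mul_le_sum_min_one
      (w := fun n x ω ↦ rstar n * exp (-β * H n x ω)) (fun n x ↦ by fun_prop)
      (fun n x y hxy ↦ (hindep.indepFun (i := ⟨n, x⟩) (j := ⟨n, y⟩) (by simpa using hxy)).comp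
        (hg n) (hg n))
      (by filter_upwards [eventually_ge_atTop 2] with n hn x ω
          using mul_nonneg (hrstar n hn x).1.le (exp_pos _).le)
      (by filter_upwards [eventually_ge_atTop 2] with n hn using hprob n hn)
      (by filter_upwards [eventually_ge_atTop 1] with n hn; positivity)
      (by simpa [rpow_neg, div_eq_mul_inv] using summable_rpow_div_two_pow cstar) hη
  have hc : 0 < cstar := by linarith [log_nonneg (by norm_num : (1 : ℝ) ≤ 4)]
  refine ⟨fun n ω ↦ (Finset.sum_le_card_nsmul _ _ 1 fun x _ ↦ min_le_left _ _).trans_eq (by simp),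
    hlower, fun η hη ↦ ?_⟩
  filter_upwards [hlower η hη] with ω hω
  exact eventually_min_one_div_sum_le_of_tendsto (fun n ↦ by positivity)
    ((tendsto_rpow_neg_atTop hc).comp tendsto_natCast_atTop_atTop) hη hω
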